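/- Densest subgraph counterexample construction: let G be the complete graph on n vertices v₁,…,v_n where every edge incident to v₁ has weight n/2 + 1 and every other edge has weight 1. Then the densest subgraph of G is the whole vertex set and its density equals n − 1. -/

import Mathlib

/-!
With `k = |S|`, the sum of `w a b` over ordered pairs of distinct vertices of `S` is
`k (k - 1)`, plus `n (k - 1)` when the hub `v₁` lies in `S`. So a set avoiding the hub has
density `(k - 1) / 2`, and a set containing it has density `(k - 1)(k + n) / (2k)`, which is at
most `n - 1` because `2k (n - 1) - (k - 1)(k + n) = (k + 1)(n - k) ≥ 0`, with equality at `k = n`.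
-/

open Finset

variable {α : Type*} [DecidableEq α]

def starWeight (z : α) (c : ℝ) (a b : α) : ℝ :=
  if a ≠ b then (if a = z ∨ b = z then c else 1) else 0

noncomputable def weightedDensity (w : α → α → ℝ) (S : Finset α) : ℝ :=
  ((1 / 2) * ∑ a ∈ S, ∑ b ∈ S.erase a, w a b) / #S

section StarWeight

variable {z : α} (c : ℝ)

lemma sum_sum_erase_starWeight_of_notMem {S : Finset α} (hz : z ∉ S) :
    ∑ a ∈ S, ∑ b ∈ S.erase a, starWeight z c a b = #S * (#S - 1 : ℝ) := by
  have hrow : ∀ a ∈ S, ∑ b ∈ S.erase a, starWeight z c a b = (#S - 1 : ℝ) := by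
    intro a ha
    rw [sum_congr rfl (g := fun _ => (1 : ℝ)), sum_const, card_erase_of_mem ha,
      nsmul_one, Nat.cast_pred (card_pos.2 ⟨a, ha⟩)]
    intro b hb
    have hab : a ≠ b := fun h => (mem_erase.1 hb).1 h.symm
    have hfar : ¬(a = z ∨ b = z) := by
      rintro (rfl | rfl)
      exacts [hz ha, hz (mem_of_mem_erase hb)]
    simp [starWeight, hab, hfar]
  rw [sum_congr rfl hrow, sum_const, nsmul_eq_mul]

lemma sum_sum_erase_starWeight_insert {T : Finset α} (hz : z ∉ T) :
    ∑ a ∈ insert z T, ∑ b ∈ (insert z T).erase a, starWeight z c a b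
      = 2 * c * #T + #T * (#T - 1 : ℝ) := by
  have hhub : ∑ b ∈ T, starWeight z c z b = c * #T := by
    rw [sum_congr rfl (g := fun _ => c), sum_const, nsmul_eq_mul, mul_comm]
    intro b hb
    simp [starWeight, show z ≠ b from fun h => hz (h ▸ hb)]
  have hleaf : ∀ a ∈ T, ∑ b ∈ (insert z T).erase a, starWeight z c a b
      = c + ∑ b ∈ T.erase a, starWeight z c a b := by
    intro a ha
    have haz : a ≠ z := fun h => hz (h ▸ ha)
    rw [erase_insert_of_ne haz.symm, sum_insert fun h => hz (mem_of_mem_erase h)]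
    simp [starWeight, haz]
  rw [sum_insert hz, erase_insert hz, hhub, sum_congr rfl hleaf, sum_add_distrib, sum_const,
    nsmul_eq_mul, sum_sum_erase_starWeight_of_notMem c hz]
  ring

lemma weightedDensity_starWeight_of_notMem {S : Finset α} (hz : z ∉ S) (hS : S.Nonempty) :
    weightedDensity (starWeight z c) S = (#S - 1) / 2 := by
  have hk : (#S : ℝ) ≠ 0 := by exact_mod_cast hS.card_pos.ne'
  rw [weightedDensity, sum_sum_erase_starWeight_of_notMem c hz]
  field_simp

lemma weightedDensity_starWeight_insert {T : Finset α} (hz : z ∉ T) :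
    weightedDensity (starWeight z c) (insert z T) = #T * (2 * c + #T - 1) / (2 * (#T + 1)) := by
  rw [weightedDensity, sum_sum_erase_starWeight_insert c hz, card_insert_of_notMem hz]
  push_cast
  field_simp
  ring

end StarWeight

section Fintype

variable [Fintype α] (z : α)

lemma weightedDensity_starWeight_univ :
    weightedDensity (starWeight z (Fintype.card α / 2 + 1)) univ = Fintype.card α - 1 := by
  have hcard : (#(univ.erase z) : ℝ) = Fintype.card α - 1 := by
    rw [card_erase_of_mem (mem_univ z), card_univ, Nat.cast_pred (Fintype.card_pos_iff.2 ⟨z⟩)]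
  have hpos : (Fintype.card α : ℝ) ≠ 0 := by exact_mod_cast (Fintype.card_pos_iff.2 ⟨z⟩).ne'
  rw [← insert_erase (mem_univ z), weightedDensity_starWeight_insert _ (notMem_erase z _), hcard,
    sub_add_cancel]
  field_simp
  ring

lemma weightedDensity_starWeight_le {S : Finset α} (hS : S.Nonempty) :
    weightedDensity (starWeight z (Fintype.card α / 2 + 1)) S ≤ Fintype.card α - 1 := by
  by_cases hz : z ∈ S
  · set m : ℝ := (#(S.erase z) : ℝ)
    have hm : m + 1 ≤ Fintype.card α := by
      simp only [m]
      exact_mod_cast (card_erase_add_one hz).trans_le (card_le_univ S)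
    rw [← insert_erase hz, weightedDensity_starWeight_insert _ (notMem_erase z S),
      div_le_iff₀ (by positivity)]
    nlinarith [show (0 : ℝ) ≤ m by positivity]
  · have hS' : (#S : ℝ) + 1 ≤ Fintype.card α := by
      exact_mod_cast card_lt_univ_of_notMem hz
    rw [weightedDensity_starWeight_of_notMem _ hz hS]
    linarith [show (1 : ℝ) ≤ #S by exact_mod_cast hS.card_pos]

end Fintype

/-- in the counterexample graph on `n ≥ 2` vertices (edges incident to `v₁`
of weight `n/2 + 1`, all other edges of weight `1`), the density of the whole vertex set
equals `n − 1`, and this is the maximum density over all nonempty subsets. Density of a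
nonempty `S` is half the sum over ordered pairs of distinct vertices in `S`, divided by
`|S|`. -/
theorem counterexample_densest_subgraph (n : ℕ) (hn : 2 ≤ n)
    (w : Fin n → Fin n → ℝ)
    (hw : w = fun i j =>
      if i ≠ j then (if i.val = 0 ∨ j.val = 0 then (n : ℝ) / 2 + 1 else 1) else 0)
    (density : Finset (Fin n) → ℝ)
    (hdensity : density = fun S => ((1 / 2) * ∑ a ∈ S, ∑ b ∈ S.erase a, w a b) / S.card) :
    density Finset.univ = (n : ℝ) - 1 ∧
      ∀ S : Finset (Fin n), S.Nonempty → density S ≤ (n : ℝ) - 1 := by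
  let hub : Fin n := ⟨0, by omega⟩
  have hcard : (Fintype.card (Fin n) : ℝ) = n := by rw [Fintype.card_fin]
  have hstar : w = starWeight hub (Fintype.card (Fin n) / 2 + 1) := by
    rw [hw, hcard]
    funext i j
    simp [starWeight, hub, Fin.ext_iff]
  obtain rfl : density = weightedDensity w := hdensity
  subst hstar
  rw [← hcard]
  exact ⟨weightedDensity_starWeight_univ hub, fun _ => weightedDensity_starWeight_le hub⟩
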